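/- For all m ≥ 0 and n ≥ 0, ω(a_{m,n}) = ω(d_m); that is, all entries in the same row of the array have the same number of distinct prime factors. -/

import Mathlib

/-- `Z a b = a*b / gcd(a,b)^2`. -/
def Zfun (a b : ℕ) : ℕ := a * b / Nat.gcd a b ^ 2

/-- The array: `ent 0 n` is the `n`-th prime (0-indexed), and
`ent (m+1) n = Z (ent m n) (ent m (n + 1))`. -/
noncomputable def ent : ℕ → ℕ → ℕ
  | 0, n => Nat.nth Nat.Prime n
  | m + 1, n => Zfun (ent m n) (ent m (n + 1))

/-- The left edge `d_m`. -/
noncomputable def dseq (m : ℕ) : ℕ := ent m 0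


/-!
Every entry of row `m` is a product of distinct primes with the same shape: there is a finite set
`S_m` of offsets with `a_{m,n} = ∏_{i ∈ S_m} p_{n+i}` for all `n`. Indeed, for pairwise coprime
factors `Z` cancels the common part twice, so `Z (∏_A, ∏_B) = ∏_{A ∆ B}`, and the passage from
`n` to `n + 1` shifts the offsets by one; hence `S_{m+1} = S_m ∆ (S_m + 1)`. The entry
`a_{m,n}` then has exactly `#S_m` prime factors, independently of `n`.
-/

open Finset Function
open scoped symmDiff

theorem Zfun_mul_mul_of_coprime {g a b : ℕ} (hg : 0 < g) (hab : a.Coprime b) :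
    Zfun (g * a) (g * b) = a * b := by
  rw [Zfun, Nat.gcd_mul_left, hab, mul_one, show g * a * (g * b) = g ^ 2 * (a * b) by ring,
    Nat.mul_div_cancel_left _ (pow_pos hg 2)]

theorem Zfun_prod_prod {ι : Type*} [DecidableEq ι] {f : ι → ℕ}
    (hf : Pairwise (Nat.Coprime on f)) (h0 : ∀ i, f i ≠ 0) (A B : Finset ι) :
    Zfun (∏ i ∈ A, f i) (∏ i ∈ B, f i) = ∏ i ∈ A ∆ B, f i := by
  have hcop : Nat.Coprime (∏ i ∈ A \ B, f i) (∏ i ∈ B \ A, f i) :=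
    Nat.Coprime.prod_left fun i hi => Nat.Coprime.prod_right fun j hj =>
      hf fun hij => (mem_sdiff.mp hi).2 (hij ▸ (mem_sdiff.mp hj).1)
  rw [← prod_inter_mul_prod_sdiff A B, ← prod_inter_mul_prod_sdiff B A, inter_comm B A,
    Zfun_mul_mul_of_coprime (prod_pos fun i _ => Nat.pos_of_ne_zero (h0 i)) hcop,
    symmDiff_def, sup_eq_union, prod_union disjoint_sdiff_sdiff]

theorem card_primeFactors_prod_of_injective {ι : Type*} {f : ι → ℕ} (hf : Injective f)
    (hp : ∀ i, (f i).Prime) (S : Finset ι) :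
    (∏ i ∈ S, f i).primeFactors.card = S.card := by
  classical
  rw [← prod_image (f := fun p => p) fun i _ j _ hij => hf hij,
    Nat.primeFactors_prod (forall_mem_image.2 fun i _ => hp i),
    card_image_of_injective S hf]

theorem injective_nth_prime_add (n : ℕ) : Injective fun i => Nat.nth Nat.Prime (n + i) :=
  (Nat.nth_injective Nat.infinite_setOfPred_prime).comp (add_right_injective n)

def rowOffsets : ℕ → Finset ℕ
  | 0 => {0}
  | m + 1 => rowOffsets m ∆ (rowOffsets m).map (addRightEmbedding 1)

theorem ent_eq_prod_rowOffsets (m n : ℕ) :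
    ent m n = ∏ i ∈ rowOffsets m, Nat.nth Nat.Prime (n + i) := by
  induction m generalizing n with
  | zero => simp [ent, rowOffsets]
  | succ m ih =>
    have hshift : ent m (n + 1) =
        ∏ i ∈ (rowOffsets m).map (addRightEmbedding 1), Nat.nth Nat.Prime (n + i) := by
      simp only [ih, prod_map, addRightEmbedding_apply, add_assoc, add_comm 1]
    rw [ent, ih, hshift, rowOffsets,
      Zfun_prod_prod ((injective_nth_prime_add n).pairwise_ne.mono fun i j hij =>
        (Nat.coprime_primes (Nat.prime_nth_prime _) (Nat.prime_nth_prime _)).mpr hij)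
        fun i => (Nat.prime_nth_prime _).ne_zero]

theorem card_primeFactors_ent (m n : ℕ) :
    (ent m n).primeFactors.card = (rowOffsets m).card := by
  rw [ent_eq_prod_rowOffsets,
    card_primeFactors_prod_of_injective (injective_nth_prime_add n) fun _ => Nat.prime_nth_prime _]

theorem omega_row_constant (m n : ℕ) :
    (ent m n).primeFactors.card = (dseq m).primeFactors.card := by
  rw [dseq, card_primeFactors_ent, card_primeFactors_ent]
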